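/- arXiv:2205.09737 — 2 statements merged into one kernel-verified Lean document; each statement's English description precedes it below -/
import Mathlib

section
/- Let U_S(ρ,z) = (1/4) log(μ^{𝔪}_− μ^{−𝔪}_+ / ρ²) and V_S = −2U_S, with μ^s_± = sqrt(ρ²+(z−s)²) ± (z−s), 𝔪 > 0. Then as ρ → 0 with |z| > 𝔪: U_S = (sgn(z)/4) log(|z+𝔪|/|z−𝔪|) + O(ρ²) and V_S = −(sgn(z)/2) log(|z+𝔪|/|z−𝔪|) + O(ρ²); in particular U_S and V_S extend continuously to the axes ρ = 0, |z| > 𝔪. -/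
open Real Filter Topology

private lemma aux1 (c ρ : ℝ) (hc : 0 < c) (hρ : 0 < ρ) :
    |Real.log (Real.sqrt (ρ^2 + c^2) + c) - Real.log (2*c)| ≤ ρ^2 / (4*c^2) := by
  have hsq : (0:ℝ) ≤ ρ^2 + c^2 := by positivity
  have hs1 : c ≤ Real.sqrt (ρ^2 + c^2) := by
    calc c = Real.sqrt (c^2) := (Real.sqrt_sq hc.le).symm
    _ ≤ _ := Real.sqrt_le_sqrt (by nlinarith)
  have hs2 : Real.sqrt (ρ^2 + c^2) ≤ c + ρ^2/(2*c) := by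
    have h1 : ρ^2 + c^2 ≤ (c + ρ^2/(2*c))^2 := by
      have : (c + ρ^2/(2*c))^2 = c^2 + ρ^2 + (ρ^2/(2*c))^2 := by
        field_simp; ring
      nlinarith [sq_nonneg (ρ^2/(2*c))]
    calc Real.sqrt (ρ^2 + c^2) ≤ Real.sqrt ((c + ρ^2/(2*c))^2) := Real.sqrt_le_sqrt h1
    _ = c + ρ^2/(2*c) := Real.sqrt_sq (by positivity)
  set s := Real.sqrt (ρ^2 + c^2) with hs
  have hspos : 0 < s + c := by linarith
  have h2c : (0:ℝ) < 2*c := by linarith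
  rw [← Real.log_div hspos.ne' h2c.ne']
  have hratio1 : 1 ≤ (s + c)/(2*c) := by
    rw [le_div_iff₀ h2c]; linarith
  rw [abs_of_nonneg (Real.log_nonneg hratio1)]
  have hlog := Real.log_le_sub_one_of_pos (show (0:ℝ) < (s+c)/(2*c) by positivity)
  have hub : (s + c)/(2*c) - 1 ≤ ρ^2/(4*c^2) := by
    rw [div_sub_one h2c.ne', div_le_div_iff₀ h2c (by positivity)]
    have ht : ρ^2/(2*c) * (2*c) = ρ^2 := by field_simp
    nlinarith [mul_le_mul_of_nonneg_right (show s - c ≤ ρ^2/(2*c) by linarith)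
      (show (0:ℝ) ≤ 4*c^2 by positivity), ht]
  linarith

private lemma ident (p q ρ : ℝ) (hq : 0 < q) (hρ : 0 < ρ) :
    (Real.sqrt (ρ^2 + q^2) - q) * (Real.sqrt (ρ^2 + p^2) + p) / ρ^2
      = (Real.sqrt (ρ^2 + p^2) + p) / (Real.sqrt (ρ^2 + q^2) + q) := by
  have hsq : (0:ℝ) ≤ ρ^2 + q^2 := by positivity
  have hkey : (Real.sqrt (ρ^2 + q^2) - q) * (Real.sqrt (ρ^2 + q^2) + q) = ρ^2 := by
    have h := Real.sq_sqrt hsq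
    nlinarith [h]
  have hs1 : q ≤ Real.sqrt (ρ^2 + q^2) := by
    calc q = Real.sqrt (q^2) := (Real.sqrt_sq hq.le).symm
    _ ≤ _ := Real.sqrt_le_sqrt (by nlinarith)
  have hden : (0:ℝ) < Real.sqrt (ρ^2 + q^2) + q := by linarith
  field_simp
  linear_combination (Real.sqrt (ρ^2 + p^2) + p) * hkey

private lemma core (p q ρ : ℝ) (hp : 0 < p) (hq : 0 < q) (hρ : 0 < ρ) :
    |(1/4) * Real.log ((Real.sqrt (ρ^2 + p^2) + p) / (Real.sqrt (ρ^2 + q^2) + q))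
      - (1/4) * Real.log (p/q)| ≤ ρ^2 * (1/(16*p^2) + 1/(16*q^2)) := by
  have hsp : p ≤ Real.sqrt (ρ^2 + p^2) := by
    calc p = Real.sqrt (p^2) := (Real.sqrt_sq hp.le).symm
    _ ≤ _ := Real.sqrt_le_sqrt (by nlinarith)
  have hsq : q ≤ Real.sqrt (ρ^2 + q^2) := by
    calc q = Real.sqrt (q^2) := (Real.sqrt_sq hq.le).symm
    _ ≤ _ := Real.sqrt_le_sqrt (by nlinarith)
  have hnum : (0:ℝ) < Real.sqrt (ρ^2 + p^2) + p := by linarith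
  have hden : (0:ℝ) < Real.sqrt (ρ^2 + q^2) + q := by linarith
  rw [Real.log_div hnum.ne' hden.ne', Real.log_div hp.ne' hq.ne']
  have h1 := aux1 p ρ hp hρ
  have h2 := aux1 q ρ hq hρ
  have e1 : Real.log (2*p) = Real.log 2 + Real.log p := Real.log_mul two_ne_zero hp.ne'
  have e2 : Real.log (2*q) = Real.log 2 + Real.log q := Real.log_mul two_ne_zero hq.ne'
  rw [e1] at h1; rw [e2] at h2
  rw [abs_le] at h1 h2 ⊢
  have ep : ρ^2/(4*p^2) = ρ^2 * (1/(4*p^2)) := by ring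
  have eq' : ρ^2/(4*q^2) = ρ^2 * (1/(4*q^2)) := by ring
  rw [ep] at h1; rw [eq'] at h2
  have ee : ρ^2*(1/(16*p^2) + 1/(16*q^2))
      = (1/4)*(ρ^2*(1/(4*p^2))) + (1/4)*(ρ^2*(1/(4*q^2))) := by ring
  constructor <;> linarith [h1.1, h1.2, h2.1, h2.2]

theorem US_VS_axis_asymptotics (𝔪 : ℝ) (h𝔪 : 0 < 𝔪) (z : ℝ) (hz : 𝔪 < |z|) :
    (∃ C ρ₀ : ℝ, 0 < C ∧ 0 < ρ₀ ∧ ∀ ρ : ℝ, 0 < ρ → ρ < ρ₀ →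
      |(1/4) * Real.log
          ((Real.sqrt (ρ^2 + (z - 𝔪)^2) - (z - 𝔪))
            * (Real.sqrt (ρ^2 + (z + 𝔪)^2) + (z + 𝔪)) / ρ^2)
        - (Real.sign z / 4) * Real.log (|z + 𝔪| / |z - 𝔪|)| ≤ C * ρ^2 ∧
      |(-2) * ((1/4) * Real.log
          ((Real.sqrt (ρ^2 + (z - 𝔪)^2) - (z - 𝔪))
            * (Real.sqrt (ρ^2 + (z + 𝔪)^2) + (z + 𝔪)) / ρ^2))
        - (-(Real.sign z / 2)) * Real.log (|z + 𝔪| / |z - 𝔪|)| ≤ C * ρ^2) ∧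
    Tendsto (fun ρ : ℝ => (1/4) * Real.log
        ((Real.sqrt (ρ^2 + (z - 𝔪)^2) - (z - 𝔪))
          * (Real.sqrt (ρ^2 + (z + 𝔪)^2) + (z + 𝔪)) / ρ^2))
      (𝓝[>] 0) (𝓝 ((Real.sign z / 4) * Real.log (|z + 𝔪| / |z - 𝔪|))) ∧
    Tendsto (fun ρ : ℝ => (-2) * ((1/4) * Real.log
        ((Real.sqrt (ρ^2 + (z - 𝔪)^2) - (z - 𝔪))
          * (Real.sqrt (ρ^2 + (z + 𝔪)^2) + (z + 𝔪)) / ρ^2)))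
      (𝓝[>] 0) (𝓝 (-(Real.sign z / 2) * Real.log (|z + 𝔪| / |z - 𝔪|))) := by
  set f : ℝ → ℝ := fun ρ => (1/4) * Real.log
      ((Real.sqrt (ρ^2 + (z - 𝔪)^2) - (z - 𝔪))
        * (Real.sqrt (ρ^2 + (z + 𝔪)^2) + (z + 𝔪)) / ρ^2) with hf
  set L : ℝ := (Real.sign z / 4) * Real.log (|z + 𝔪| / |z - 𝔪|) with hL
  obtain ⟨p, q, hp, hq, hid, hLpq⟩ :
      ∃ p q : ℝ, 0 < p ∧ 0 < q ∧
        (∀ ρ : ℝ, 0 < ρ →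
          (Real.sqrt (ρ^2 + (z - 𝔪)^2) - (z - 𝔪))
            * (Real.sqrt (ρ^2 + (z + 𝔪)^2) + (z + 𝔪)) / ρ^2
          = (Real.sqrt (ρ^2 + p^2) + p) / (Real.sqrt (ρ^2 + q^2) + q)) ∧
        L = (1/4) * Real.log (p/q) := by
    rcases le_or_gt 0 z with hz0 | hz0
    · -- z > 𝔪
      have hzpos : 𝔪 < z := by rwa [abs_of_nonneg hz0] at hz
      refine ⟨z + 𝔪, z - 𝔪, by linarith, by linarith, ?_, ?_⟩
      · intro ρ hρ
        exact ident (z + 𝔪) (z - 𝔪) ρ (by linarith) hρ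
      · rw [hL, Real.sign_of_pos (by linarith : (0:ℝ) < z),
          abs_of_pos (by linarith : (0:ℝ) < z + 𝔪),
          abs_of_pos (by linarith : (0:ℝ) < z - 𝔪)]
    · -- z < -𝔪
      have hzneg : z < -𝔪 := by
        rw [abs_of_neg hz0] at hz; linarith
      refine ⟨𝔪 - z, -(z + 𝔪), by linarith, by linarith, ?_, ?_⟩
      · intro ρ hρ
        have h := ident (𝔪 - z) (-(z + 𝔪)) ρ (by linarith) hρ
        calc (Real.sqrt (ρ^2 + (z - 𝔪)^2) - (z - 𝔪))
              * (Real.sqrt (ρ^2 + (z + 𝔪)^2) + (z + 𝔪)) / ρ^2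
            = (Real.sqrt (ρ^2 + (-(z + 𝔪))^2) - (-(z + 𝔪)))
              * (Real.sqrt (ρ^2 + (𝔪 - z)^2) + (𝔪 - z)) / ρ^2 := by
              rw [show (z - 𝔪)^2 = (𝔪 - z)^2 by ring, show (z + 𝔪)^2 = (-(z + 𝔪))^2 by ring]
              ring
          _ = _ := h
      · have hzm : z + 𝔪 < 0 := by linarith
        have hzm2 : z - 𝔪 < 0 := by linarith
        rw [hL, Real.sign_of_neg (by linarith : z < 0),
          abs_of_neg hzm, abs_of_neg hzm2,
          Real.log_div (show (0:ℝ) < -(z+𝔪) by linarith).ne' (show (0:ℝ) < -(z-𝔪) by linarith).ne',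
          Real.log_div (show (0:ℝ) < 𝔪 - z by linarith).ne' (show (0:ℝ) < -(z+𝔪) by linarith).ne']
        rw [show -(z - 𝔪) = 𝔪 - z by ring]
        ring
  set B : ℝ := 1/(16*p^2) + 1/(16*q^2) with hB
  have hBpos : 0 < B := by positivity
  have hbound : ∀ ρ : ℝ, 0 < ρ → |f ρ - L| ≤ B * ρ^2 := by
    intro ρ hρ
    have h := core p q ρ hp hq hρ
    rw [hf, hLpq]
    simp only [hid ρ hρ]
    calc |(1/4) * Real.log ((Real.sqrt (ρ^2 + p^2) + p) / (Real.sqrt (ρ^2 + q^2) + q))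
          - (1/4) * Real.log (p/q)| ≤ ρ^2 * B := h
      _ = B * ρ^2 := by ring
  have htendU : Tendsto f (𝓝[>] 0) (𝓝 L) := by
    have h0 : Tendsto (fun ρ : ℝ => B * ρ^2) (𝓝[>] 0) (𝓝 0) := by
      have : Tendsto (fun ρ : ℝ => B * ρ^2) (𝓝 (0:ℝ)) (𝓝 (B * 0^2)) := by
        exact (continuous_const.mul (continuous_pow 2)).tendsto 0
      simpa using this.mono_left nhdsWithin_le_nhds
    have hev : ∀ᶠ ρ in 𝓝[>] (0:ℝ), ‖f ρ - L‖ ≤ B * ρ^2 := by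
      filter_upwards [self_mem_nhdsWithin] with ρ hρ
      exact (Real.norm_eq_abs _).symm ▸ hbound ρ hρ
    have := squeeze_zero_norm' hev h0
    have h2 := this.add_const L
    simpa using h2
  refine ⟨⟨2*B, 1, by positivity, one_pos, ?_⟩, htendU, ?_⟩
  · intro ρ hρ _
    have h := hbound ρ hρ
    have hB2 : 0 ≤ B * ρ^2 := by positivity
    constructor
    · calc |f ρ - L| ≤ B * ρ^2 := h
        _ ≤ 2*B * ρ^2 := by linarith
    · have : (-2 : ℝ) * f ρ - (-(Real.sign z / 2)) * Real.log (|z + 𝔪| / |z - 𝔪|)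
          = (-2) * (f ρ - L) := by rw [hL]; ring
      rw [this, abs_mul]
      calc |(-2 : ℝ)| * |f ρ - L| = 2 * |f ρ - L| := by norm_num
        _ ≤ 2 * (B * ρ^2) := by linarith
        _ = 2*B * ρ^2 := by ring
  · have h := htendU.const_mul (-2 : ℝ)
    have : -(Real.sign z / 2) * Real.log (|z + 𝔪| / |z - 𝔪|) = (-2) * L := by
      rw [hL]; ring
    rw [this]
    exact h
end

section
/- Let α, λ₂₂ be smooth functions near a point (0, z₀) of the axis Γ_− = {ρ = 0, z < 𝔪} with λ₂₂(ρ,z) = (1/2)∂²_ρλ₂₂(0,z)·ρ² + o(ρ²) and ∂²_ρλ₂₂(0,z) > 0. Then the cone angle deficiency of the metric g = e^{2U+2α}/(2√(ρ²+(z−𝔪)²))(dρ²+dz²) + e^{2U}λ₂₂(dφ²)² at (0,z₀) vanishes (limit of 2π·Radius/Circumference equals 1) if and only if α(0,z₀) = (1/2) log(|z₀−𝔪| ∂²_ρλ₂₂(0,z₀)). -/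
open Real Filter Topology

theorem cone_angle_condition
    (𝔪 z₀ L : ℝ) (hz₀ : z₀ < 𝔪) (hL : 0 < L)
    (U α lam22 : ℝ → ℝ)
    (hU : ContinuousOn U (Set.Icc 0 1))
    (hα : ContinuousOn α (Set.Icc 0 1))
    (hlam : (fun ρ => lam22 ρ - (1/2) * L * ρ^2) =o[𝓝[>] (0:ℝ)] fun ρ => ρ^2)
    (hlampos : ∀ ρ : ℝ, 0 < ρ → 0 < lam22 ρ) :
    Tendsto (fun ρ : ℝ =>
        (∫ t in (0:ℝ)..ρ,
          Real.sqrt (Real.exp (2 * U t + 2 * α t)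
            / (2 * Real.sqrt (t^2 + (z₀ - 𝔪)^2))))
          / Real.sqrt (Real.exp (2 * U ρ) * lam22 ρ))
      (𝓝[>] 0) (𝓝 1)
    ↔ α 0 = (1/2) * Real.log (|z₀ - 𝔪| * L) := by
  have hne : z₀ - 𝔪 ≠ 0 := sub_ne_zero.2 (ne_of_lt hz₀)
  have habs : 0 < |z₀ - 𝔪| := abs_pos.2 hne
  have hM : 0 < |z₀ - 𝔪| * L := mul_pos habs hL
  set f : ℝ → ℝ := fun t =>
    Real.sqrt (Real.exp (2 * U t + 2 * α t) / (2 * Real.sqrt (t^2 + (z₀ - 𝔪)^2))) with hf_def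
  -- continuity of f on [0,1]
  have hsq_pos : ∀ t : ℝ, 0 < t^2 + (z₀ - 𝔪)^2 := fun t => by positivity
  have hfc : ContinuousOn f (Set.Icc 0 1) := by
    apply ContinuousOn.sqrt
    apply ContinuousOn.div
    · exact (Real.continuous_exp.comp_continuousOn
        ((continuousOn_const.mul hU).add (continuousOn_const.mul hα)))
    · exact (continuous_const.mul (Real.continuous_sqrt.comp
        ((continuous_pow 2).add continuous_const))).continuousOn
    · intro t _
      have : 0 < Real.sqrt (t^2 + (z₀ - 𝔪)^2) := Real.sqrt_pos.2 (hsq_pos t)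
      positivity
  have h01 : (0:ℝ) ∈ Set.Icc (0:ℝ) 1 := ⟨le_refl 0, zero_le_one⟩
  have hle : 𝓝[Set.Ioi (0:ℝ)] 0 ≤ 𝓝[Set.Icc (0:ℝ) 1] 0 := by
    rw [← nhdsWithin_Ioc_eq_nhdsGT (zero_lt_one (α := ℝ))]
    exact nhdsWithin_mono _ Set.Ioc_subset_Icc_self
  -- numerator limit
  have hmeas : StronglyMeasurableAtFilter f (𝓝[Set.Ioi (0:ℝ)] 0) := by
    obtain ⟨s, hs, hsm⟩ := hfc.stronglyMeasurableAtFilter_nhdsWithin measurableSet_Icc 0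
    exact ⟨s, hle hs, hsm⟩
  have hcw : ContinuousWithinAt f (Set.Ioi (0:ℝ)) 0 :=
    (hfc.continuousWithinAt h01).mono_left hle
  have hG : HasDerivWithinAt (fun u => ∫ t in (0:ℝ)..u, f t) (f 0) (Set.Ici 0) 0 :=
    intervalIntegral.integral_hasDerivWithinAt_right
      IntervalIntegrable.refl hmeas hcw
  rw [hasDerivWithinAt_iff_tendsto_slope, Set.Ici_sdiff_left] at hG
  have hnum : Tendsto (fun ρ => (∫ t in (0:ℝ)..ρ, f t) / ρ) (𝓝[>] 0) (𝓝 (f 0)) := by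
    refine hG.congr' ?_
    filter_upwards [self_mem_nhdsWithin] with ρ _
    simp [slope_def_field, intervalIntegral.integral_same]
  -- denominator limit
  have hlam2 : Tendsto (fun ρ => lam22 ρ / ρ^2) (𝓝[>] 0) (𝓝 (L/2)) := by
    have h0 := hlam.tendsto_div_nhds_zero
    have h1 : Tendsto (fun ρ : ℝ => (lam22 ρ - (1/2) * L * ρ^2) / ρ^2 + L/2) (𝓝[>] 0)
        (𝓝 (0 + L/2)) := h0.add tendsto_const_nhds
    rw [zero_add] at h1
    refine h1.congr' ?_
    filter_upwards [self_mem_nhdsWithin] with ρ (hρ : 0 < ρ)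
    have hρ2 : ρ^2 ≠ 0 := by positivity
    field_simp
    ring
  have hUc : Tendsto U (𝓝[>] 0) (𝓝 (U 0)) := (hU.continuousWithinAt h01).mono_left hle
  have hden : Tendsto (fun ρ => Real.sqrt (Real.exp (2 * U ρ) * lam22 ρ) / ρ) (𝓝[>] 0)
      (𝓝 (Real.sqrt (Real.exp (2 * U 0) * (L/2)))) := by
    have hin : Tendsto (fun ρ => Real.exp (2 * U ρ) * (lam22 ρ / ρ^2)) (𝓝[>] 0)
        (𝓝 (Real.exp (2 * U 0) * (L/2))) :=
      ((Real.continuous_exp.tendsto _).comp (hUc.const_mul 2)).mul hlam2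
    refine ((Real.continuous_sqrt.tendsto _).comp hin).congr' ?_
    filter_upwards [self_mem_nhdsWithin] with ρ (hρ : 0 < ρ)
    have hl := (hlampos ρ hρ).le
    show Real.sqrt (Real.exp (2 * U ρ) * (lam22 ρ / ρ^2)) = _
    rw [show Real.exp (2 * U ρ) * (lam22 ρ / ρ^2) = (Real.exp (2 * U ρ) * lam22 ρ) / ρ^2 by ring,
      Real.sqrt_div (by positivity), Real.sqrt_sq hρ.le]
  have hdenpos : (0:ℝ) < Real.sqrt (Real.exp (2 * U 0) * (L/2)) :=
    Real.sqrt_pos.2 (by positivity)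
  -- key limit
  have key : Tendsto (fun ρ : ℝ =>
        (∫ t in (0:ℝ)..ρ, f t) / Real.sqrt (Real.exp (2 * U ρ) * lam22 ρ)) (𝓝[>] 0)
      (𝓝 (Real.exp (α 0) / Real.sqrt (|z₀ - 𝔪| * L))) := by
    have hdiv := hnum.div hden hdenpos.ne'
    have hval : f 0 / Real.sqrt (Real.exp (2 * U 0) * (L/2))
        = Real.exp (α 0) / Real.sqrt (|z₀ - 𝔪| * L) := by
      have h1 : f 0 = Real.sqrt (Real.exp (2 * U 0 + 2 * α 0) / (2 * |z₀ - 𝔪|)) := by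
        simp [hf_def, Real.sqrt_sq_eq_abs]
      rw [h1, ← Real.sqrt_div (by positivity)]
      have harg : Real.exp (2 * U 0 + 2 * α 0) / (2 * |z₀ - 𝔪|) / (Real.exp (2 * U 0) * (L/2))
          = Real.exp (α 0) ^ 2 / (|z₀ - 𝔪| * L) := by
        rw [Real.exp_add, show (2:ℝ) * α 0 = (2:ℕ) * α 0 by norm_num, Real.exp_nat_mul]
        have he : Real.exp (2 * U 0) ≠ 0 := (Real.exp_pos _).ne'
        field_simp
      rw [harg, Real.sqrt_div (sq_nonneg _), Real.sqrt_sq (Real.exp_pos _).le]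
    rw [← hval]
    refine hdiv.congr' ?_
    filter_upwards [self_mem_nhdsWithin] with ρ (hρ : 0 < ρ)
    simp only [Pi.div_apply]
    rw [div_div_div_comm, div_self hρ.ne', div_one]
  -- conclude
  have hsqrtM : Real.sqrt (|z₀ - 𝔪| * L) = Real.exp ((1/2) * Real.log (|z₀ - 𝔪| * L)) := by
    rw [show (1/2) * Real.log (|z₀ - 𝔪| * L) = Real.log (|z₀ - 𝔪| * L) / 2 by ring,
      ← Real.log_sqrt hM.le, Real.exp_log (Real.sqrt_pos.2 hM)]
  constructor
  · intro h
    have huniq : (1:ℝ) = Real.exp (α 0) / Real.sqrt (|z₀ - 𝔪| * L) :=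
      tendsto_nhds_unique h key
    have hexp : Real.exp (α 0) = Real.sqrt (|z₀ - 𝔪| * L) := by
      rw [eq_comm, div_eq_one_iff_eq (Real.sqrt_pos.2 hM).ne'] at huniq
      exact huniq
    have := congrArg Real.log hexp
    rw [Real.log_exp, Real.log_sqrt hM.le] at this
    linarith
  · intro h
    have : Real.exp (α 0) / Real.sqrt (|z₀ - 𝔪| * L) = 1 := by
      rw [h, hsqrtM, div_self (Real.exp_pos _).ne']
    rwa [this] at key
end
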